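/- Let 0 ≤ β < 1 and let (Y_t)_{t∈ℤ} be stationary and ergodic with E[log⁺ Y_t²] < ∞. Then the series X_t = ω/(1−β) + α Σ_{i=0}^∞ β^i Y_{t−1−i}² converges absolutely almost surely, the process (X_t) is stationary, and it satisfies the recursion X_{t+1} = ω + α Y_t² + β X_t almost surely. -/

import Mathlib

open MeasureTheory
open scoped ENNReal

lemma tsum_nonneg_eq_toReal (g : ℕ → ℝ) (hg : ∀ i, 0 ≤ g i) :
    ∑' i, g i = (∑' i, ENNReal.ofReal (g i)).toReal := by
  by_cases h : Summable g
  · rw [← ENNReal.ofReal_tsum_of_nonneg hg h, ENNReal.toReal_ofReal (tsum_nonneg hg)]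
  · rw [tsum_eq_zero_of_not_summable h]
    have htop : ∑' i, ENNReal.ofReal (g i) = ∞ := by
      by_contra h'
      exact h ((ENNReal.summable_toReal h').congr
        (fun i => ENNReal.toReal_ofReal (hg i)))
    rw [htop, ENNReal.toReal_top]

lemma measurable_Phi (ω0 α β : ℝ) (hβ0 : 0 ≤ β) :
    Measurable (fun f : ℤ → ℝ => fun t : ℤ =>
      ω0/(1-β) + α * ∑' i : ℕ, β^i * (f (t - 1 - (i:ℤ)))^2) := by
  apply measurable_pi_lambda
  intro t
  have hrw : ∀ f : ℤ → ℝ, ∑' i : ℕ, β^i * (f (t-1-(i:ℤ)))^2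
      = (∑' i : ℕ, ENNReal.ofReal (β^i * (f (t-1-(i:ℤ)))^2)).toReal :=
    fun f => tsum_nonneg_eq_toReal _ (fun i => mul_nonneg (pow_nonneg hβ0 i) (sq_nonneg _))
  simp only [hrw]
  apply Measurable.const_add
  apply Measurable.const_mul
  apply ENNReal.measurable_toReal.comp
  apply Measurable.ennreal_tsum
  intro i
  exact ENNReal.measurable_ofReal.comp (((measurable_pi_apply _).pow_const 2).const_mul _)

theorem stmt_15 {Ω : Type*} [MeasurableSpace Ω] (μ : Measure Ω) [IsProbabilityMeasure μ]
    (Y : ℤ → Ω → ℝ) (hYmeas : ∀ t, Measurable (Y t))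
    (ω0 α β : ℝ) (hω : 0 ≤ ω0) (hα : 0 ≤ α) (hβ0 : 0 ≤ β) (hβ1 : β < 1)
    (hstat : Measure.map (fun ω (t : ℤ) => Y (t+1) ω) μ
      = Measure.map (fun ω (t : ℤ) => Y t ω) μ)
    (herg : Ergodic (fun f : ℤ → ℝ => fun t => f (t+1))
      (Measure.map (fun ω (t : ℤ) => Y t ω) μ))
    (hlog : ∀ t : ℤ, Integrable (fun ω => max (Real.log ((Y t ω)^2)) 0) μ)
    (X : ℤ → Ω → ℝ)
    (hXdef : ∀ (t : ℤ) (ω' : Ω),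
      X t ω' = ω0/(1-β) + α * ∑' i : ℕ, β^i * (Y (t - 1 - (i:ℤ)) ω')^2) :
    (∀ᵐ ω' ∂μ, ∀ t : ℤ, Summable (fun i : ℕ => β^i * (Y (t - 1 - (i:ℤ)) ω')^2)) ∧
    (Measure.map (fun ω' (t : ℤ) => X (t+1) ω') μ
      = Measure.map (fun ω' (t : ℤ) => X t ω') μ) ∧
    (∀ᵐ ω' ∂μ, ∀ t : ℤ, X (t+1) ω' = ω0 + α * (Y t ω')^2 + β * X t ω') := by
  have hYpath : Measurable (fun ω (t : ℤ) => Y t ω) :=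
    measurable_pi_lambda _ hYmeas
  have hYpath1 : Measurable (fun ω (t : ℤ) => Y (t+1) ω) :=
    measurable_pi_lambda _ (fun t => hYmeas (t+1))
  -- all marginals coincide
  have hstep : ∀ s : ℤ, Measure.map (Y (s+1)) μ = Measure.map (Y s) μ := by
    intro s
    have h1 : Y (s+1) = (fun f : ℤ → ℝ => f s) ∘ (fun ω (t : ℤ) => Y (t+1) ω) := rfl
    have h2 : Y s = (fun f : ℤ → ℝ => f s) ∘ (fun ω (t : ℤ) => Y t ω) := rfl
    rw [h1, h2, ← Measure.map_map (measurable_pi_apply s) hYpath1,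
      ← Measure.map_map (measurable_pi_apply s) hYpath, hstat]
  have hident : ∀ s : ℤ, Measure.map (Y s) μ = Measure.map (Y 0) μ := by
    intro s
    induction s using Int.induction_on with
    | zero => rfl
    | succ k ih => exact (hstep k).trans ih
    | pred k ih =>
      have h := hstep (-(k:ℤ) - 1)
      rw [show (-(k:ℤ) - 1 + 1) = -(k:ℤ) by ring] at h
      exact h.symm.trans ih
  have hidset : ∀ (s : ℤ) (B : Set ℝ), MeasurableSet B →
      μ (Y s ⁻¹' B) = μ (Y 0 ⁻¹' B) := by
    intro s B hB
    rw [← Measure.map_apply (hYmeas s) hB, ← Measure.map_apply (hYmeas 0) hB, hident s]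
  -- Part 1 : almost sure summability
  have part1 : ∀ᵐ ω' ∂μ, ∀ t : ℤ,
      Summable (fun i : ℕ => β^i * (Y (t - 1 - (i:ℤ)) ω')^2) := by
    rw [ae_all_iff]
    intro t
    rcases eq_or_lt_of_le hβ0 with hb | hb
    · filter_upwards with ω'
      apply summable_of_ne_finset_zero (s := ({0} : Finset ℕ))
      intro i hi
      simp only [Finset.mem_singleton] at hi
      rw [← hb, zero_pow hi, zero_mul]
    · set r : ℝ := (1+β)/2 with hr
      have hr0 : 0 < r := by rw [hr]; linarith
      have hr1 : r < 1 := by rw [hr]; linarith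
      have hβr : β < r := by rw [hr]; linarith
      set ε : ℝ := Real.log (r/β) with hε
      have hεpos : 0 < ε := Real.log_pos ((one_lt_div hb).2 hβr)
      have hexp : Real.exp ε = r/β := Real.exp_log (div_pos hr0 hb)
      set g : Ω → ℝ := fun ω => max (Real.log ((Y 0 ω)^2)) 0 / ε with hg
      have hgint : Integrable g μ := (hlog 0).div_const ε
      have hgnn : 0 ≤ g := fun ω => div_nonneg (le_max_right _ _) hεpos.le
      set B : ℕ → Set ℝ := fun i =>
        {x : ℝ | max (Real.log (x^2)) 0 / ε ∈ Set.Ioi (i:ℝ)} with hB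
      have hBmeas : ∀ i, MeasurableSet (B i) := by
        intro i
        exact (((Real.measurable_log.comp (measurable_id.pow_const 2)).max
          measurable_const).div_const ε) measurableSet_Ioi
      letI : MeasureSpace Ω := ⟨μ⟩
      haveI : IsProbabilityMeasure (volume : Measure Ω) :=
        (inferInstance : IsProbabilityMeasure μ)
      have htsum : (∑' i : ℕ, μ (Y (t-1-(i:ℤ)) ⁻¹' B i)) ≠ ∞ := by
        have h0 : ∀ i : ℕ, μ (Y (t-1-(i:ℤ)) ⁻¹' B i) = μ {ω | g ω ∈ Set.Ioi (i:ℝ)} :=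
          fun i => hidset _ _ (hBmeas i)
        rw [tsum_congr h0]
        exact (ProbabilityTheory.tsum_prob_mem_Ioi_lt_top hgint hgnn).ne
      filter_upwards [ae_eventually_notMem htsum] with ω' hω'
      obtain ⟨N, hN⟩ := Filter.eventually_atTop.1 hω'
      rw [← summable_nat_add_iff N]
      have hbd : ∀ i : ℕ, β^(i+N) * (Y (t - 1 - ((i+N : ℕ):ℤ)) ω')^2 ≤ r^(i+N) := by
        intro i
        have hmem := hN (i+N) (Nat.le_add_left N i)
        simp only [hB, Set.mem_preimage, Set.mem_setOf_eq, Set.mem_Ioi, not_lt] at hmem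
        have hlog2 : Real.log ((Y (t - 1 - ((i+N : ℕ):ℤ)) ω')^2) ≤ ε * (i+N) := by
          have := (div_le_iff₀ hεpos).1 hmem
          calc Real.log ((Y (t - 1 - ((i+N : ℕ):ℤ)) ω')^2)
              ≤ max (Real.log ((Y (t - 1 - ((i+N : ℕ):ℤ)) ω')^2)) 0 := le_max_left _ _
            _ ≤ (i+N : ℕ) * ε := this
            _ = ε * (i+N) := by push_cast; ring
        have hYle : (Y (t - 1 - ((i+N : ℕ):ℤ)) ω')^2 ≤ Real.exp (ε * (i+N)) := by
          rcases le_or_gt ((Y (t - 1 - ((i+N : ℕ):ℤ)) ω')^2) 0 with h | h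
          · exact h.trans (Real.exp_pos _).le
          · rw [← Real.exp_log h]; exact Real.exp_le_exp.2 hlog2
        calc β^(i+N) * (Y (t - 1 - ((i+N : ℕ):ℤ)) ω')^2
            ≤ β^(i+N) * Real.exp (ε * (i+N)) := by
              exact mul_le_mul_of_nonneg_left hYle (pow_nonneg hβ0 _)
          _ = β^(i+N) * (Real.exp ε)^(i+N) := by
              rw [mul_comm ε ((i:ℝ)+N), ← Real.exp_nat_mul]; push_cast; ring_nf
          _ = (β * Real.exp ε)^(i+N) := (mul_pow _ _ _).symm
          _ = r^(i+N) := by rw [hexp, mul_comm, div_mul_cancel₀ r hb.ne']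
      apply Summable.of_nonneg_of_le
        (fun i => mul_nonneg (pow_nonneg hβ0 _) (sq_nonneg _)) hbd
      simp_rw [pow_add]
      exact (summable_geometric_of_lt_one hr0.le hr1).mul_right _
  -- Part 2 : stationarity
  have hΦm := measurable_Phi ω0 α β hβ0
  have hX1 : (fun ω' (t : ℤ) => X t ω')
      = (fun f : ℤ → ℝ => fun t : ℤ =>
          ω0/(1-β) + α * ∑' i : ℕ, β^i * (f (t - 1 - (i:ℤ)))^2)
        ∘ (fun ω' (t : ℤ) => Y t ω') := by
    funext ω' t
    exact hXdef t ω'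
  have hX2 : (fun ω' (t : ℤ) => X (t+1) ω')
      = (fun f : ℤ → ℝ => fun t : ℤ =>
          ω0/(1-β) + α * ∑' i : ℕ, β^i * (f (t - 1 - (i:ℤ)))^2)
        ∘ (fun ω' (t : ℤ) => Y (t+1) ω') := by
    funext ω' t
    show X (t+1) ω' = ω0/(1-β) + α * ∑' i : ℕ, β^i * (Y ((t - 1 - (i:ℤ)) + 1) ω')^2
    rw [hXdef]
    congr 1
    congr 1
    exact tsum_congr fun i => by rw [show (t + 1 - 1 - (i:ℤ)) = t - 1 - (i:ℤ) + 1 by ring]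
  have part2 : Measure.map (fun ω' (t : ℤ) => X (t+1) ω') μ
      = Measure.map (fun ω' (t : ℤ) => X t ω') μ := by
    rw [hX1, hX2, ← Measure.map_map hΦm hYpath1, ← Measure.map_map hΦm hYpath, hstat]
  refine ⟨part1, part2, ?_⟩
  -- Part 3 : recursion
  filter_upwards [part1] with ω' hs
  intro t
  have hidx : ∀ i : ℕ, (t+1) - 1 - (i:ℤ) = t - (i:ℤ) := fun i => by ring
  have hsum1 : Summable (fun i : ℕ => β^i * (Y (t - (i:ℤ)) ω')^2) := by
    have h := hs (t+1)
    exact h.congr fun i => by rw [hidx i]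
  have key : ∑' i : ℕ, β^i * (Y ((t+1) - 1 - (i:ℤ)) ω')^2
      = (Y t ω')^2 + β * ∑' i : ℕ, β^i * (Y (t - 1 - (i:ℤ)) ω')^2 := by
    calc ∑' i : ℕ, β^i * (Y ((t+1) - 1 - (i:ℤ)) ω')^2
        = ∑' i : ℕ, β^i * (Y (t - (i:ℤ)) ω')^2 := tsum_congr fun i => by rw [hidx i]
      _ = β^0 * (Y (t - ((0:ℕ):ℤ)) ω')^2
          + ∑' i : ℕ, β^(i+1) * (Y (t - ((i+1 : ℕ):ℤ)) ω')^2 := hsum1.tsum_eq_zero_add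
      _ = (Y t ω')^2 + β * ∑' i : ℕ, β^i * (Y (t - 1 - (i:ℤ)) ω')^2 := by
          congr 1
          · simp
          · rw [← tsum_mul_left]
            exact tsum_congr fun i => by
              rw [show (t - ((i+1 : ℕ):ℤ)) = t - 1 - (i:ℤ) by push_cast; ring, pow_succ]
              ring
  rw [hXdef (t+1) ω', hXdef t ω', key]
  have h1β : (1:ℝ) - β ≠ 0 := by intro h; linarith [sub_eq_zero.1 h]
  field_simp
  ring
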